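/- arXiv:2312.05414 — 4 statements merged into one kernel-verified Lean document; each statement's English description precedes it below -/
import Mathlib

section
/- Define U_0(y)=y^3, V_0(y)=y^{-1}, and recursively U_n = U_{n-1}^3 + 3 U_{n-1} V_{n-1}^2 + 4 V_{n-1}^3, V_n = U_{n-1}^2 V_{n-1} + 4 U_{n-1} V_{n-1}^2 + 3 V_{n-1}^3. Then for every natural number n, y^{3^n} U_n(y) and y^{3^n} V_n(y) are polynomials in y^4 with integer coefficients. -/
/-!
The recursion `(U, V) ↦ (U³ + 3UV² + 4V³, U²V + 4UV² + 3V³)` is a pair of homogeneous cubics, so it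
commutes with rescaling `(U, V) ↦ (tU, tV)` up to `t ↦ t³`. Rescaling stage `n` by `y ^ 3 ^ n` therefore
turns the recursion into itself, started from `y · (y³, y⁻¹) = (y⁴, 1)`; iterating the same cubics over
`ℤ[X]` from `(X, 1)` gives integer polynomials that evaluate at `y⁴` to the rescaled pair.
-/

noncomputable def UV : ℕ → ((ℂ → ℂ) × (ℂ → ℂ))
  | 0 => (fun y => y ^ 3, fun y => y⁻¹)
  | n + 1 =>
    (fun y => (UV n).1 y ^ 3 + 3 * (UV n).1 y * (UV n).2 y ^ 2 + 4 * (UV n).2 y ^ 3,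
     fun y => (UV n).1 y ^ 2 * (UV n).2 y + 4 * (UV n).1 y * (UV n).2 y ^ 2
       + 3 * (UV n).2 y ^ 3)

open Polynomial

section CubicStep

variable {R S : Type*} [CommRing R] [CommRing S]

def cubicStep (p : R × R) : R × R :=
  (p.1 ^ 3 + 3 * p.1 * p.2 ^ 2 + 4 * p.2 ^ 3, p.1 ^ 2 * p.2 + 4 * p.1 * p.2 ^ 2 + 3 * p.2 ^ 3)

theorem cubicStep_smul (t : R) (p : R × R) : cubicStep (t • p) = t ^ 3 • cubicStep p := by
  ext <;> simp only [cubicStep, Prod.smul_fst, Prod.smul_snd, smul_eq_mul] <;> ring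

theorem map_cubicStep {F : Type*} [FunLike F R S] [RingHomClass F R S] (f : F) (p : R × R) :
    Prod.map f f (cubicStep p) = cubicStep (Prod.map f f p) := by
  simp [cubicStep, map_ofNat]

end CubicStep

theorem UV_succ_apply (n : ℕ) (y : ℂ) :
    ((UV (n + 1)).1 y, (UV (n + 1)).2 y) = cubicStep ((UV n).1 y, (UV n).2 y) :=
  rfl

noncomputable def cubicStepPoly : ℕ → ℤ[X] × ℤ[X]
  | 0 => (X, 1)
  | n + 1 => cubicStep (cubicStepPoly n)

theorem pow_smul_UV_eq_aeval_cubicStepPoly (n : ℕ) {y : ℂ} (hy : y ≠ 0) :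
    y ^ 3 ^ n • ((UV n).1 y, (UV n).2 y) =
      Prod.map (aeval (y ^ 4)) (aeval (y ^ 4)) (cubicStepPoly n) := by
  induction n with
  | zero => simp [UV, cubicStepPoly, hy, ← pow_succ']
  | succ n ih =>
    rw [UV_succ_apply, pow_succ, pow_mul, ← cubicStep_smul, ih, cubicStepPoly, map_cubicStep]

theorem stmt0 (n : ℕ) :
    ∃ P Q : Polynomial ℤ,
      (∀ y : ℂ, y ≠ 0 → y ^ (3 ^ n) * (UV n).1 y = Polynomial.aeval (y ^ 4) P) ∧
      (∀ y : ℂ, y ≠ 0 → y ^ (3 ^ n) * (UV n).2 y = Polynomial.aeval (y ^ 4) Q) :=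
  ⟨(cubicStepPoly n).1, (cubicStepPoly n).2,
    fun _ hy => congrArg Prod.fst (pow_smul_UV_eq_aeval_cubicStepPoly n hy),
    fun _ hy => congrArg Prod.snd (pow_smul_UV_eq_aeval_cubicStepPoly n hy)⟩
end

section
/- For g(z) = z^2 + z, if j_1 < j_2 are natural numbers then the polynomials g^{∘j_1}(z) + 2 and g^{∘j_2}(z) + 2 have no common complex root; moreover for any j < n, g^{∘j}(z) + 2 and g^{∘n}(z) + 1 have no common complex root. -/
/-!
Once an orbit of `g` hits `-2` it moves to `g (-2) = 2`, and `g` maps the real ray `[2, ∞)` into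
itself since `x ^ 2 + x ≥ x` there. So every later iterate is a real number `≥ 2`, never `-2` or `-1`.
-/

noncomputable def g (z : ℂ) : ℂ := z ^ 2 + z

open Complex Set

lemma g_ofReal (x : ℝ) : g x = ((x ^ 2 + x : ℝ) : ℂ) := by
  simp [g]

lemma mapsTo_g_ofReal_Ici_two : MapsTo g (ofReal '' Ici 2) (ofReal '' Ici 2) := by
  rintro _ ⟨x, hx : 2 ≤ x, rfl⟩
  exact ⟨x ^ 2 + x, show 2 ≤ x ^ 2 + x by nlinarith, (g_ofReal x).symm⟩

lemma iterate_g_mem_ofReal_Ici_two {j k : ℕ} {z : ℂ} (hj : g^[j] z = -2) (hjk : j < k) :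
    g^[k] z ∈ ofReal '' Ici 2 := by
  obtain ⟨m, rfl⟩ := Nat.exists_eq_add_of_lt hjk
  have h_two : g^[j + 1] z = 2 := by
    rw [Function.iterate_succ_apply', hj]
    norm_num [g]
  rw [show j + m + 1 = m + (j + 1) by omega, Function.iterate_add_apply, h_two]
  exact mapsTo_g_ofReal_Ici_two.iterate m ⟨2, self_mem_Ici, by norm_num⟩

lemma iterate_g_ne_ofReal_of_lt_two {j k : ℕ} {z : ℂ} (hj : g^[j] z = -2) (hjk : j < k) {x : ℝ}
    (hx : x < 2) : g^[k] z ≠ x := by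
  intro hkx
  obtain ⟨y, hy : 2 ≤ y, hyx⟩ := hkx ▸ iterate_g_mem_ofReal_Ici_two hj hjk
  exact hx.not_ge (ofReal_injective hyx ▸ hy)

theorem stmt9 :
    (∀ j₁ j₂ : ℕ, j₁ < j₂ → ∀ z : ℂ, g^[j₁] z = -2 → g^[j₂] z ≠ -2) ∧
    (∀ j n : ℕ, j < n → ∀ z : ℂ, g^[j] z = -2 → g^[n] z ≠ -1) :=
  ⟨fun _ _ hj _ hz => by
    simpa using iterate_g_ne_ofReal_of_lt_two hz hj (x := -2) (by norm_num),
   fun _ _ hj _ hz => by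
    simpa using iterate_g_ne_ofReal_of_lt_two hz hj (x := -1) (by norm_num)⟩
end

section
/- For every complex x with Re(x) > 0, every positive integer n, and every real p > 0: |∑_{j=0}^{n-1} 1/(x+pj) - (1/p)·log((x+pn)/x)| < ∑_{j=0}^{n-1} p/|x+pj|^2, where log is the principal branch. -/
open Complex intervalIntegral in
lemma aux_key (z : ℂ) (hz : 0 < z.re) (p : ℝ) (hp : 0 < p) :
    ‖1/z - (1/p) * (Complex.log (z + p) - Complex.log z)‖ ≤
      p / (2 * ‖z‖ ^ 2) := by
  have hz0 : z ≠ 0 := fun h => by simp [h] at hz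
  have habsz : 0 < ‖z‖ := norm_pos_iff.mpr hz0
  have hre : ∀ t : ℝ, 0 ≤ t → 0 < (z + t • (p:ℂ)).re := by
    intro t ht
    simp only [add_re, real_smul, mul_re, ofReal_re, ofReal_im, mul_zero, sub_zero]
    nlinarith [mul_nonneg ht hp.le]
  have hne : ∀ t : ℝ, 0 ≤ t → z + t • (p:ℂ) ≠ 0 := by
    intro t ht h
    have h2 := hre t ht
    rw [h] at h2
    simp at h2
  have habs : ∀ t : ℝ, 0 ≤ t → ‖z‖ ≤ ‖z + t • (p:ℂ)‖ := by
    intro t ht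
    rw [Complex.norm_def, Complex.norm_def]
    apply Real.sqrt_le_sqrt
    simp only [normSq_apply, add_re, add_im, real_smul, mul_re, mul_im, ofReal_re, ofReal_im,
      mul_zero, sub_zero, zero_mul, add_zero]
    nlinarith [mul_nonneg ht hp.le, hz]
  have hcont : ContinuousOn (fun t : ℝ ↦ (fun w : ℂ => w⁻¹) (z + t • (p:ℂ))) (Set.Icc 0 1) :=
    ContinuousOn.inv₀ (by fun_prop) (fun t ht => hne t ht.1)
  have hderiv : ∀ t ∈ Set.Icc (0:ℝ) 1,
      HasDerivAt Complex.log ((fun w : ℂ => w⁻¹) (z + t • (p:ℂ))) (z + t • (p:ℂ)) := by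
    intro t ht
    exact Complex.hasDerivAt_log (Or.inl (hre t ht.1))
  have hInt := integral_unitInterval_deriv_eq_sub hcont hderiv
  have hpz : (p:ℂ) ≠ 0 := by exact_mod_cast hp.ne'
  have h1 : (1/(p:ℂ)) * (Complex.log (z + p) - Complex.log z)
      = ∫ t in (0:ℝ)..1, (z + t • (p:ℂ))⁻¹ := by
    rw [← hInt, smul_eq_mul, one_div, inv_mul_cancel_left₀ hpz]
  have hint1 : IntervalIntegrable (fun t : ℝ => (z + t • (p:ℂ))⁻¹)
      MeasureTheory.volume 0 1 := hcont.intervalIntegrable_of_Icc zero_le_one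
  have h3 : 1/z - ∫ t in (0:ℝ)..1, (z + t • (p:ℂ))⁻¹
      = ∫ t in (0:ℝ)..1, (z⁻¹ - (z + t • (p:ℂ))⁻¹) := by
    rw [intervalIntegral.integral_sub intervalIntegrable_const hint1]
    simp [one_div]
  rw [h1, h3]
  calc ‖∫ t in (0:ℝ)..1, (z⁻¹ - (z + t • (p:ℂ))⁻¹)‖
      ≤ ∫ t in (0:ℝ)..1, ‖z⁻¹ - (z + t • (p:ℂ))⁻¹‖ :=
        intervalIntegral.norm_integral_le_integral_norm zero_le_one
    _ ≤ ∫ t in (0:ℝ)..1, t * (p / ‖z‖ ^ 2) := by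
        apply intervalIntegral.integral_mono_on zero_le_one
        · exact ((continuousOn_const.sub hcont).norm).intervalIntegrable_of_Icc zero_le_one
        · exact (Continuous.intervalIntegrable (by fun_prop) 0 1)
        · intro t ht
          obtain ⟨ht0, ht1⟩ := Set.mem_Icc.mp ht
          have heq : z⁻¹ - (z + t • (p:ℂ))⁻¹ = (t • (p:ℂ)) / (z * (z + t • (p:ℂ))) := by
            rw [inv_sub_inv hz0 (hne t ht0), add_sub_cancel_left]
          rw [heq, norm_div, norm_mul]
          have habst : ‖t • (p:ℂ)‖ = t * p := by
            rw [real_smul, norm_mul, Complex.norm_of_nonneg ht0, Complex.norm_of_nonneg hp.le]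
          rw [habst]
          have hrhs : t * (p / ‖z‖ ^ 2)
              = t * p / (‖z‖ * ‖z‖) := by rw [pow_two]; ring
          rw [hrhs]
          gcongr
          exact habs t ht0
    _ = p / (2 * ‖z‖ ^ 2) := by
        rw [intervalIntegral.integral_mul_const, integral_id]
        field_simp
        norm_num

lemma aux_logdiv {a b : ℂ} (ha : 0 < a.re) (hb : 0 < b.re) :
    Complex.log (a / b) = Complex.log a - Complex.log b := by
  have ha0 : a ≠ 0 := fun h => by simp [h] at ha
  have hb0 : b ≠ 0 := fun h => by simp [h] at hb
  have h : Complex.exp (Complex.log a - Complex.log b) = a / b := by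
    rw [Complex.exp_sub, Complex.exp_log ha0, Complex.exp_log hb0]
  have h1 : |a.arg| < Real.pi/2 := Complex.abs_arg_lt_pi_div_two_iff.mpr (Or.inl ha)
  have h2 : |b.arg| < Real.pi/2 := Complex.abs_arg_lt_pi_div_two_iff.mpr (Or.inl hb)
  rw [abs_lt] at h1 h2
  rw [← h, Complex.log_exp]
  · simp only [Complex.sub_im, Complex.log_im]
    linarith
  · simp only [Complex.sub_im, Complex.log_im]
    linarith

theorem stmt14 (x : ℂ) (hx : 0 < x.re) (n : ℕ) (hn : 0 < n) (p : ℝ) (hp : 0 < p) :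
    ‖∑ j ∈ Finset.range n, 1 / (x + p * j) -
        (1 / p) * Complex.log ((x + p * n) / x)‖ <
      ∑ j ∈ Finset.range n, p / ‖x + p * j‖ ^ 2 := by
  have hre : ∀ j : ℕ, 0 < (x + p * j).re := by
    intro j
    simp only [Complex.add_re, Complex.mul_re, Complex.ofReal_re, Complex.ofReal_im,
      Complex.natCast_re, Complex.natCast_im, mul_zero, zero_mul, sub_zero]
    have : (0:ℝ) ≤ p * j := mul_nonneg hp.le (Nat.cast_nonneg j)
    linarith
  have hlogdiv : Complex.log ((x + p * n) / x) = Complex.log (x + p * n) - Complex.log x :=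
    aux_logdiv (hre n) hx
  have htel : Complex.log (x + p * n) - Complex.log x
      = ∑ j ∈ Finset.range n, (Complex.log (x + p * (j+1:ℕ)) - Complex.log (x + p * j)) := by
    rw [Finset.sum_range_sub (fun j : ℕ => Complex.log (x + p * j))]
    simp
  have hsum : ∑ j ∈ Finset.range n, 1 / (x + p * j) -
        (1 / p) * Complex.log ((x + p * n) / x)
      = ∑ j ∈ Finset.range n, (1 / (x + p * j) -
          (1 / p) * (Complex.log (x + p * j + p) - Complex.log (x + p * j))) := by
    rw [hlogdiv, htel, Finset.mul_sum, ← Finset.sum_sub_distrib]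
    congr 1
    ext j
    congr 3
    push_cast
    ring
  rw [hsum]
  calc ‖∑ j ∈ Finset.range n, (1 / (x + p * j) -
          (1 / p) * (Complex.log (x + p * j + p) - Complex.log (x + p * j)))‖
      ≤ ∑ j ∈ Finset.range n, ‖1 / (x + p * j) -
          (1 / p) * (Complex.log (x + p * j + p) - Complex.log (x + p * j))‖ :=
        norm_sum_le _ _
    _ ≤ ∑ j ∈ Finset.range n, p / (2 * ‖x + p * j‖ ^ 2) := by
        apply Finset.sum_le_sum
        intro j _
        exact aux_key (x + p * j) (hre j) p hp
    _ < ∑ j ∈ Finset.range n, p / ‖x + p * j‖ ^ 2 := by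
        apply Finset.sum_lt_sum_of_nonempty (Finset.nonempty_range_iff.mpr hn.ne')
        intro j _
        have hne : x + p * j ≠ 0 := fun h => by simpa [h] using (hre j)
        have ha : 0 < ‖x + p * j‖ ^ 2 := pow_pos (norm_pos_iff.mpr hne) 2
        exact div_lt_div_of_pos_left hp ha (by linarith)
end

section
/- Let E be holomorphic on the right half plane {Re(x) > 0} and suppose there is C' > 0 with |E(x) - x - 4·log x| ≤ C'·log(Re x)/Re(x) for all x with Re(x) > 10 (principal log). Then there exists R > 0 such that E is injective on {x : Re(x) > R}. -/
open Complex Metric Set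

theorem stmt17 (E : ℂ → ℂ) (hE : DifferentiableOn ℂ E {x : ℂ | 0 < x.re})
    (C' : ℝ) (hC' : 0 < C')
    (hbound : ∀ x : ℂ, 10 < x.re →
      ‖E x - x - 4 * Complex.log x‖ ≤ C' * Real.log x.re / x.re) :
    ∃ R > 0, Set.InjOn E {x : ℂ | R < x.re} := by
  set R : ℝ := 100 + 8 * C' with hRdef
  have hR : (0:ℝ) < R := by positivity
  refine ⟨R, hR, ?_⟩
  set f : ℂ → ℂ := fun z => E z - z - 4 * Complex.log z with hf
  have hopen : IsOpen {z : ℂ | 10 < z.re} := isOpen_lt continuous_const Complex.continuous_re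
  have hEat : ∀ z : ℂ, 10 < z.re → DifferentiableAt ℂ E z := by
    intro z hz
    have : {x : ℂ | 0 < x.re} ∈ nhds z := by
      refine (isOpen_lt continuous_const Complex.continuous_re).mem_nhds ?_
      simp only [Set.mem_setOf_eq]; linarith
    exact (hE.differentiableAt this)
  have hfd : ∀ z : ℂ, 10 < z.re →
      HasDerivAt f (deriv E z - 1 - 4 * z⁻¹) z := by
    intro z hz
    have hlog : HasDerivAt Complex.log z⁻¹ z :=
      Complex.hasDerivAt_log (Or.inl (by linarith))
    exact (((hEat z hz).hasDerivAt.sub (hasDerivAt_id z)).sub (hlog.const_mul 4))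
  -- bound on f on {Re > 10}
  have hfbound : ∀ z : ℂ, 10 < z.re → ‖f z‖ ≤ C' := by
    intro z hz
    have h1 : ‖f z‖ ≤ C' * Real.log z.re / z.re := hbound z hz
    have hzre : (0:ℝ) < z.re := by linarith
    have hlog : Real.log z.re ≤ z.re := (Real.log_le_sub_one_of_pos hzre).trans (by linarith)
    have hlognn : 0 ≤ Real.log z.re := Real.log_nonneg (by linarith)
    calc ‖f z‖ ≤ C' * Real.log z.re / z.re := h1
      _ ≤ C' * z.re / z.re := by
          gcongr
      _ = C' := by field_simp
  -- derivative bound for E on {Re > R}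
  have key : ∀ x : ℂ, x ∈ {z : ℂ | R < z.re} → ‖deriv E x - 1‖ ≤ 1/2 := by
    intro x hx
    simp only [Set.mem_setOf_eq] at hx
    have hx100 : 100 < x.re := by nlinarith
    set r : ℝ := x.re - 11 with hr
    have hrpos : (0:ℝ) < r := by simp only [hr]; linarith
    have hball : closedBall x r ⊆ {z : ℂ | 10 < z.re} := by
      intro z hz
      simp only [mem_closedBall, Complex.dist_eq] at hz
      have : |(z - x).re| ≤ ‖z - x‖ := Complex.abs_re_le_norm _
      simp only [Complex.sub_re] at this
      have : x.re - r ≤ z.re := by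
        have := neg_abs_le ((z:ℂ) - x).re
        simp only [Complex.sub_re] at this ⊢
        nlinarith [Complex.abs_re_le_norm (z - x), Complex.sub_re z x]
      simp only [Set.mem_setOf_eq]
      simp only [hr] at this; linarith
    have hdiff : DifferentiableOn ℂ f (closedBall x r) := by
      intro z hz
      have hz10 : 10 < z.re := hball hz
      exact (hfd z hz10).differentiableAt.differentiableWithinAt
    have hdc : DiffContOnCl ℂ f (ball x r) := by
      apply DifferentiableOn.diffContOnCl
      rwa [closure_ball x hrpos.ne']
    have hsph : ∀ z ∈ sphere x r, ‖f z‖ ≤ C' := by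
      intro z hz
      exact hfbound z (hball (sphere_subset_closedBall hz))
    have hcauchy : ‖deriv f x‖ ≤ C' / r :=
      Complex.norm_deriv_le_of_forall_mem_sphere_norm_le hrpos hdc hsph
    have hderiv : deriv f x = deriv E x - 1 - 4 * x⁻¹ := (hfd x (by linarith)).deriv
    rw [hderiv] at hcauchy
    -- now assemble
    have hxabs : x.re ≤ ‖x‖ := Complex.re_le_norm x
    have hxpos : (0:ℝ) < ‖x‖ := by
      have : (0:ℝ) < x.re := by linarith
      exact lt_of_lt_of_le this hxabs
    have h4x : ‖(4:ℂ) * x⁻¹‖ ≤ 4 / x.re := by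
      rw [norm_mul, norm_inv]
      have : ‖(4:ℂ)‖ = 4 := by norm_num
      rw [this, ← div_eq_mul_inv]
      apply div_le_div_of_nonneg_left (by norm_num) (by linarith) hxabs
    have hsplit : ‖deriv E x - 1‖ ≤ ‖deriv E x - 1 - 4 * x⁻¹‖ + ‖(4:ℂ) * x⁻¹‖ := by
      have := norm_sub_le (deriv E x - 1 - 4 * x⁻¹) (-(4 * x⁻¹))
      simpa [sub_neg_eq_add, sub_add_cancel] using this
    have hb1 : C' / r ≤ 1/8 := by
      rw [div_le_iff₀ hrpos]
      simp only [hr]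
      nlinarith
    have hb2 : 4 / x.re ≤ 4/100 := by
      apply div_le_div_of_nonneg_left (by norm_num) (by norm_num) (by linarith)
    calc ‖deriv E x - 1‖ ≤ ‖deriv E x - 1 - 4 * x⁻¹‖ + ‖(4:ℂ) * x⁻¹‖ := hsplit
      _ ≤ C' / r + 4 / x.re := add_le_add hcauchy h4x
      _ ≤ 1/8 + 4/100 := add_le_add hb1 hb2
      _ ≤ 1/2 := by norm_num
  -- mean value inequality for E - id
  have hconv : Convex ℝ {z : ℂ | R < z.re} := convex_halfSpace_re_gt R
  have hmvt : ∀ a ∈ {z : ℂ | R < z.re}, ∀ b ∈ {z : ℂ | R < z.re},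
      ‖(E b - b) - (E a - a)‖ ≤ 1/2 * ‖b - a‖ := by
    intro a ha b hb
    have := hconv.norm_image_sub_le_of_norm_hasDerivWithin_le
      (f := fun z => E z - z) (f' := fun z => deriv E z - 1)
      (fun z hz => by
        have hz10 : 10 < z.re := by
          simp only [Set.mem_setOf_eq] at hz; nlinarith
        exact ((hEat z hz10).hasDerivAt.sub (hasDerivAt_id z)).hasDerivWithinAt)
      (fun z hz => key z hz) ha hb
    exact this
  intro a ha b hb hab
  have h1 := hmvt a ha b hb
  rw [hab] at h1
  have h2 : (E b - b) - (E b - a) = a - b := by ring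
  rw [h2] at h1
  have h3 : ‖a - b‖ ≤ 1/2 * ‖a - b‖ := by rwa [norm_sub_rev b a] at h1
  have h4 : ‖a - b‖ = 0 := by nlinarith [norm_nonneg (a - b)]
  exact sub_eq_zero.mp (norm_eq_zero.mp h4)
end
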